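/- The map Ψ_n : W_n → S_{2n} defined by Ψ_n(σ) = ψ ∘ σ ∘ ψ⁻¹, where ψ : [±n] → [2n] is the order-preserving bijection, is an injective group homomorphism, and for all σ ∈ W_n the Coxeter length satisfies ℓ(Ψ_n(σ)) = 2ℓ(σ) − ℓ_0(σ), where ℓ_0(σ) = |{i ∈ [n] : σ(i) < 0}|. -/

import Mathlib

/-- The hyperoctahedral group `W_n`: bijections `w` of `ℤ` with `w (-i) = -(w i)` for
all `i`, fixing every `i` with `|i| > n`.  This is the group of signed permutations of
`[±n] = {-n, …, -1, 1, …, n}`. -/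
def WB (n : ℕ) : Subgroup (Equiv.Perm ℤ) where
  carrier := {w | (∀ i : ℤ, w (-i) = -(w i)) ∧ ∀ i : ℤ, (n : ℤ) < |i| → w i = i}
  one_mem' := by
    constructor <;> intro i <;> simp
  mul_mem' := by
    rintro u v ⟨hu1, hu2⟩ ⟨hv1, hv2⟩
    constructor
    · intro i
      simp only [Equiv.Perm.mul_apply, hv1, hu1]
    · intro i hi
      simp only [Equiv.Perm.mul_apply, hv2 i hi, hu2 i hi]
  inv_mem' := by
    rintro w ⟨h1, h2⟩
    constructor
    · intro i
      apply w.injective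
      rw [Equiv.Perm.coe_inv, Equiv.apply_symm_apply, h1, Equiv.apply_symm_apply]
    · intro i hi
      apply w.injective
      rw [Equiv.Perm.coe_inv, Equiv.apply_symm_apply, h2 i hi]

/-- The standard Coxeter generators of `W_n`: `tB 0 = (-1, 1)` and
`tB i = (i, i+1)(-i, -i-1)` for `i ≥ 1`. -/
def tB : ℕ → Equiv.Perm ℤ
  | 0 => Equiv.swap (-1) 1
  | (k + 1) => Equiv.swap ((k : ℤ) + 1) ((k : ℤ) + 2) *
      Equiv.swap (-((k : ℤ) + 1)) (-((k : ℤ) + 2))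

/-- The Coxeter length of an element of `W_n`: the least length of a word in the
generators `tB 0, …, tB (n-1)` whose product is the given element. -/
noncomputable def lenB (n : ℕ) (w : WB n) : ℕ :=
  sInf {l | ∃ word : List (Fin n), word.length = l ∧
    (word.map (fun i => tB i)).prod = (w : Equiv.Perm ℤ)}

/-- The set of atoms of `z`: the minimal length elements `w` with `w⁻¹ ∘ w = z`. -/
def AtomsB (n : ℕ) (o : WB n → WB n → WB n) (z : WB n) : Set (WB n) :=
  {w | o w⁻¹ w = z ∧ ∀ v : WB n, o v⁻¹ v = z → lenB n w ≤ lenB n v}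

/-- The order-preserving bijection `ψ : [±n] → [2n]` (sending `{-n,…,-1}` to `{1,…,n}`
and `{1,…,n}` to `{n+1,…,2n}`), extended to a permutation of `ℤ` fixing `0` and
shifting the remaining integers by `n`. -/
def phiEquiv (n : ℕ) : Equiv.Perm ℤ where
  toFun i := if i = 0 then 0 else if -(n : ℤ) ≤ i ∧ i < 0 then i + n + 1 else i + n
  invFun j := if j = 0 then 0 else if 1 ≤ j ∧ j ≤ (n : ℤ) then j - n - 1 else j - n
  left_inv := by
    intro i
    dsimp only
    split_ifs <;> omega
  right_inv := by
    intro j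
    dsimp only
    split_ifs <;> omega

/-- The embedding `Ψ_n : W_n → S_{2n}`, `Ψ_n(σ) = ψ ∘ σ ∘ ψ⁻¹`. -/
def PsiB (n : ℕ) (σ : WB n) : Equiv.Perm ℤ :=
  phiEquiv n * (σ : Equiv.Perm ℤ) * (phiEquiv n)⁻¹

/-- The number of inversions of a permutation on `[2n] = {1,…,2n}`; this is the
Coxeter length in `S_{2n}`. -/
noncomputable def invS2n (n : ℕ) (w : Equiv.Perm ℤ) : ℕ :=
  {p : ℤ × ℤ | 1 ≤ p.1 ∧ p.1 < p.2 ∧ p.2 ≤ 2 * (n : ℤ) ∧ w p.2 < w p.1}.ncard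

/-- `ℓ_0(σ) = |{i ∈ [n] : σ(i) < 0}|`. -/
noncomputable def ell0 (n : ℕ) (σ : WB n) : ℕ :=
  {i : ℤ | 1 ≤ i ∧ i ≤ (n : ℤ) ∧ (σ : Equiv.Perm ℤ) i < 0}.ncard


/-!
`Ψ_n` is conjugation by `ψ`, hence an injective homomorphism; it fixes every point outside
`[2n]` because `σ` fixes `0` and every point outside `[±n]`.

For the length formula let `F(σ) = inv(Ψ_n σ) + ℓ₀(σ)` (`lenStat`). Right multiplication by a
generator `t_i` changes `F` by exactly `±2`: `Ψ_n(t_0)` is the adjacent transposition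
`(n, n+1)` and `t_0` flips the sign of `σ(1)`, while for `i ≥ 1`, `Ψ_n(t_i)` is a product of two
adjacent transpositions placed symmetrically about `n + 1/2` and `t_i` does not change `ℓ₀`.
The sign is `-` exactly when `σ(i+1) < σ(i)` (where `σ(0) = 0`), and the only element without
such a descent is the identity. Since `F(1) = 0`, `F` is twice the word length.
-/

open Finset Equiv

section WordLength

variable {G ι : Type*} [Group G]

noncomputable def wordLength (t : ι → G) (g : G) : ℕ :=
  sInf {l | ∃ word : List ι, word.length = l ∧ (word.map t).prod = g}

variable {H : Subgroup G} {t : ι → G} {F : G → ℕ} {c : ℕ}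

theorem apply_prod_le_mul_length (ht : ∀ i, t i ∈ H) (hF1 : F 1 = 0)
    (hstep : ∀ g ∈ H, ∀ i, F (g * t i) ≤ F g + c) (word : List ι) :
    F (word.map t).prod ≤ c * word.length := by
  induction word using List.reverseRecOn with
  | nil => simp [hF1]
  | append_singleton word i ih =>
    have hmem : (word.map t).prod ∈ H :=
      list_prod_mem (by simpa using fun j _ => ht j)
    have hi := hstep _ hmem i
    simp only [List.map_append, List.map_singleton, List.prod_append, List.prod_singleton,
      List.length_append, List.length_singleton, mul_add_one]
    omega

theorem exists_word_mul_length_eq (ht : ∀ i, t i ∈ H) (ht2 : ∀ i, t i * t i = 1) (hF1 : F 1 = 0)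
    (hstep : ∀ g ∈ H, ∀ i, F (g * t i) + c = F g ∨ F (g * t i) = F g + c)
    (hdesc : ∀ g ∈ H, g ≠ 1 → ∃ i, F (g * t i) < F g) {g : G} (hg : g ∈ H) :
    ∃ word : List ι, (word.map t).prod = g ∧ c * word.length = F g := by
  induction hm : F g using Nat.strong_induction_on generalizing g with
  | _ m ih =>
    by_cases h1 : g = 1
    · exact ⟨[], by simp [h1], by simp [← hm, h1, hF1]⟩
    obtain ⟨i, hi⟩ := hdesc g hg h1
    have hi' := (hstep g hg i).resolve_right (by omega)
    obtain ⟨word, hprod, hlen⟩ := ih _ (by omega) (mul_mem hg (ht i)) rfl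
    refine ⟨word ++ [i], ?_, ?_⟩
    · simp [hprod, mul_assoc, ht2]
    · simp only [List.length_append, List.length_singleton, mul_add_one]
      omega

theorem eq_mul_wordLength (ht : ∀ i, t i ∈ H) (ht2 : ∀ i, t i * t i = 1) (hF1 : F 1 = 0)
    (hstep : ∀ g ∈ H, ∀ i, F (g * t i) + c = F g ∨ F (g * t i) = F g + c)
    (hdesc : ∀ g ∈ H, g ≠ 1 → ∃ i, F (g * t i) < F g) {g : G} (hg : g ∈ H) :
    F g = c * wordLength t g := by
  obtain ⟨word₀, hprod₀, hlen₀⟩ := exists_word_mul_length_eq ht ht2 hF1 hstep hdesc hg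
  have hne : {l | ∃ word : List ι, word.length = l ∧ (word.map t).prod = g}.Nonempty :=
    ⟨_, word₀, rfl, hprod₀⟩
  obtain ⟨word₁, hlen₁, hprod₁⟩ := Nat.sInf_mem hne
  have hmin : wordLength t g ≤ word₀.length := Nat.sInf_le ⟨word₀, rfl, hprod₀⟩
  have hle : F g ≤ c * wordLength t g := by
    rw [wordLength, ← hlen₁, ← hprod₁]
    exact apply_prod_le_mul_length ht hF1
      (fun g hg i => by rcases hstep g hg i with h | h <;> omega) word₁
  have := Nat.mul_le_mul_left c hmin
  omega

end WordLength

namespace WB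

variable {n : ℕ} {w : Perm ℤ}

theorem apply_zero (hw : w ∈ WB n) : w 0 = 0 := by
  have := hw.1 0
  rw [neg_zero] at this
  omega

theorem apply_ne_zero (hw : w ∈ WB n) {x : ℤ} (hx : x ≠ 0) : w x ≠ 0 :=
  fun h => hx (w.injective (h.trans (apply_zero hw).symm))

theorem abs_apply_le (hw : w ∈ WB n) {x : ℤ} (hx : |x| ≤ n) : |w x| ≤ n := by
  by_contra! h
  rw [w.injective (hw.2 _ h)] at h
  omega

theorem eq_one_of_apply_eq_self (hw : w ∈ WB n) (h : ∀ j : ℤ, 1 ≤ j → j ≤ n → w j = j) :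
    w = 1 := by
  ext x
  rw [Perm.one_apply]
  rcases lt_trichotomy x 0 with hx | rfl | hx
  · by_cases hxn : -(n : ℤ) ≤ x
    · have := hw.1 (-x)
      rw [neg_neg, h (-x) (by omega) (by omega)] at this
      omega
    · exact hw.2 x (by rw [abs_of_neg hx]; omega)
  · exact apply_zero hw
  · by_cases hxn : x ≤ n
    · exact h x (by omega) hxn
    · exact hw.2 x (by rw [abs_of_pos hx]; omega)

theorem eq_one_of_forall_lt_apply_succ (hw : w ∈ WB n)
    (h : ∀ j : ℕ, j < n → w j < w (j + 1)) : w = 1 := by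
  have hmono : MonotoneOn (fun j : ℕ => w j - j) (Set.Iic n) :=
    monotoneOn_of_le_succ Set.ordConnected_Iic fun j _ _ hj => by
      simp only [Order.succ_eq_add_one, Set.mem_Iic] at hj ⊢
      have := h j (by omega)
      push_cast
      omega
  have hn : |w n| ≤ n := abs_apply_le hw (by simp)
  refine eq_one_of_apply_eq_self hw fun j hj1 hjn => ?_
  lift j to ℕ using (by omega)
  have h0 := hmono (Set.mem_Iic.2 (Nat.zero_le n)) (Set.mem_Iic.2 (by omega)) (Nat.zero_le j)
  have h1 := hmono (Set.mem_Iic.2 (by omega)) (Set.mem_Iic.2 le_rfl) (show j ≤ n by omega)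
  simp only [Nat.cast_zero, apply_zero hw] at h0 h1
  rw [abs_le] at hn
  omega

theorem exists_lt_of_ne_one (hw : w ∈ WB n) (hne : w ≠ 1) :
    ∃ i : Fin n, w ((i : ℕ) + 1) < w (i : ℕ) := by
  by_contra! h
  refine hne (eq_one_of_forall_lt_apply_succ hw fun j hj => ?_)
  have hle := h ⟨j, hj⟩
  have hne := w.injective.ne (show (j : ℤ) ≠ j + 1 by omega)
  push_cast at hle hne
  omega

end WB

theorem tB_mul_self (i : ℕ) : tB i * tB i = 1 := by
  ext x
  cases i
  · simp only [tB, swap_mul_self, Perm.one_apply]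
  · simp only [tB, Perm.mul_apply, Perm.one_apply, swap_apply_def]
    split_ifs <;> omega

theorem tB_mem_WB {n i : ℕ} (hi : i < n) : tB i ∈ WB n := by
  refine ⟨fun x => ?_, fun x hx => ?_⟩
  · cases i <;> simp only [tB, Perm.mul_apply, swap_apply_def] <;> split_ifs <;> omega
  · rw [lt_abs] at hx
    cases i <;> simp only [tB, Perm.mul_apply, swap_apply_def] <;> split_ifs <;> omega

section Phi

variable {n : ℕ}

theorem phiEquiv_apply_of_pos {x : ℤ} (hx : 0 < x) : phiEquiv n x = x + n := by
  simp only [phiEquiv, Equiv.coe_fn_mk]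
  split_ifs <;> omega

theorem phiEquiv_apply_of_neg {x : ℤ} (hx : -(n : ℤ) ≤ x) (hx' : x < 0) :
    phiEquiv n x = x + n + 1 := by
  simp only [phiEquiv, Equiv.coe_fn_mk]
  split_ifs <;> omega

theorem phiEquiv_lt_phiEquiv_iff {x y : ℤ} (hx : x ≠ 0) (hy : y ≠ 0) :
    phiEquiv n x < phiEquiv n y ↔ x < y := by
  simp only [phiEquiv, Equiv.coe_fn_mk]
  split_ifs <;> omega

theorem eq_zero_or_lt_abs_of_phiEquiv_notMem {x : ℤ}
    (hx : phiEquiv n x < 1 ∨ 2 * (n : ℤ) < phiEquiv n x) : x = 0 ∨ (n : ℤ) < |x| := by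
  simp only [phiEquiv, Equiv.coe_fn_mk, lt_abs] at hx ⊢
  split_ifs at hx <;> omega

theorem conj_phiEquiv_apply_phiEquiv (w : Perm ℤ) (x : ℤ) :
    MulAut.conj (phiEquiv n) w (phiEquiv n x) = phiEquiv n (w x) := by
  simp

end Phi

theorem card_filter_or_eq_add {α : Type*} [DecidableEq α] {s : Finset α} {p q : α → Prop}
    [DecidablePred p] [DecidablePred q] {a : α} (ha : a ∈ s) (hpa : ¬p a) :
    #{x ∈ s | (p x ∨ x = a) ∧ q x} = #{x ∈ s | p x ∧ q x} + if q a then 1 else 0 := by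
  split_ifs with hqa
  · rw [← card_insert_of_notMem (s := {x ∈ s | p x ∧ q x}) (a := a) (by simp [hpa])]
    congr 1
    ext x
    by_cases hx : x = a <;> simp [hx, ha, hpa, hqa]
  · congr 1
    ext x
    by_cases hx : x = a <;> simp [hx, hqa]

noncomputable def invCount (m : ℤ) (w : Perm ℤ) : ℕ :=
  #{p ∈ Icc 1 m ×ˢ Icc 1 m | p.1 < p.2 ∧ w p.2 < w p.1}

theorem invS2n_eq_invCount (n : ℕ) (w : Perm ℤ) : invS2n n w = invCount (2 * n) w := by
  rw [invS2n, invCount, ← Set.ncard_coe_finset]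
  congr 1
  ext ⟨x, y⟩
  simp only [Set.mem_ofPred_eq, coe_filter, mem_product, mem_Icc]
  omega

theorem invCount_mul_swap {m a : ℤ} (ha : 1 ≤ a) (ham : a + 1 ≤ m) (w : Perm ℤ) :
    invCount m (w * swap a (a + 1)) + (if w (a + 1) < w a then 1 else 0) =
      invCount m w + (if w a < w (a + 1) then 1 else 0) := by
  set s := swap a (a + 1)
  set S := Icc 1 m ×ˢ Icc 1 m
  have hs : ∀ x, s (s x) = x := swap_apply_self a (a + 1)
  have hsS : ∀ p, p ∈ S ↔ prodCongr s s p ∈ S := by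
    rintro ⟨x, y⟩
    simp only [S, s, mem_product, mem_Icc, prodCongr_apply, Prod.map, swap_apply_def]
    split_ifs <;> omega
  have hreindex : invCount m (w * s) = #{p ∈ S | s p.1 < s p.2 ∧ w p.2 < w p.1} := by
    refine card_equiv (prodCongr s s) fun p => ?_
    rw [mem_filter, mem_filter, ← hsS]
    simp only [Perm.mul_apply, prodCongr_apply, Prod.map_fst, Prod.map_snd, hs]
    rfl
  -- `s` reverses the relative order of `a, a + 1` and of no other pair
  have horder : ∀ p : ℤ × ℤ, s p.1 < s p.2 ∨ p = (a, a + 1) ↔ p.1 < p.2 ∨ p = (a + 1, a) := by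
    rintro ⟨x, y⟩
    simp only [s, swap_apply_def, Prod.mk.injEq]
    split_ifs <;> omega
  have hmem : ∀ {x y}, x ∈ Icc 1 m → y ∈ Icc 1 m → (x, y) ∈ S :=
    fun hx hy => mem_product.2 ⟨hx, hy⟩
  have ha₁ : a ∈ Icc 1 m := mem_Icc.2 ⟨ha, by omega⟩
  have ha₂ : a + 1 ∈ Icc 1 m := mem_Icc.2 ⟨by omega, ham⟩
  rw [hreindex, invCount,
    ← card_filter_or_eq_add (p := fun p => s p.1 < s p.2) (hmem ha₁ ha₂) (by simp [s]),
    ← card_filter_or_eq_add (p := fun p => p.1 < p.2) (hmem ha₂ ha₁) (by simp)]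
  simp only [horder]

noncomputable def negCount (n : ℕ) (w : Perm ℤ) : ℕ :=
  #{i ∈ Icc 1 (n : ℤ) | w i < 0}

theorem ell0_eq_negCount {n : ℕ} (σ : WB n) : ell0 n σ = negCount n σ := by
  rw [ell0, negCount, ← Set.ncard_coe_finset]
  congr 1
  ext x
  simp only [Set.mem_ofPred_eq, coe_filter, mem_Icc, and_assoc]

theorem negCount_mul_tB_zero {n : ℕ} (hn : 0 < n) {w : Perm ℤ} (hw : w ∈ WB n) :
    negCount n (w * tB 0) + (if w 1 < 0 then 1 else 0) =
      negCount n w + (if 0 < w 1 then 1 else 0) := by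
  have hsplit : ∀ v : Perm ℤ,
      negCount n v = #{i ∈ Icc 2 (n : ℤ) | v i < 0} + if v 1 < 0 then 1 else 0 := fun v => by
    rw [negCount, show Icc 1 (n : ℤ) = insert 1 (Icc 2 (n : ℤ)) by ext; simp; omega, filter_insert]
    split_ifs <;> simp
  have hfix : ∀ i ∈ Icc 2 (n : ℤ), (w * tB 0) i = w i := fun i hi => by
    rw [mem_Icc] at hi
    simp only [tB, Perm.mul_apply, swap_apply_of_ne_of_ne (by omega : i ≠ -1) (by omega : i ≠ 1)]
  have h1 : (w * tB 0) 1 = -w 1 := by simp [tB, ← hw.1]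
  rw [hsplit, hsplit, filter_congr fun i hi => by rw [hfix i hi], h1]
  split_ifs <;> omega

theorem negCount_mul_tB_succ {n k : ℕ} (hk : k + 2 ≤ n) (w : Perm ℤ) :
    negCount n (w * tB (k + 1)) = negCount n w := by
  refine card_equiv (tB (k + 1)) fun x => ?_
  rw [mem_filter, mem_filter]
  simp only [mem_Icc, Perm.mul_apply, and_congr_left_iff]
  intro _
  simp only [tB, Perm.mul_apply, swap_apply_def]
  split_ifs <;> omega

section LenStat

variable {n : ℕ} {w : Perm ℤ}

noncomputable def lenStat (n : ℕ) (w : Perm ℤ) : ℕ :=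
  invCount (2 * n) (MulAut.conj (phiEquiv n) w) + negCount n w

theorem lenStat_one : lenStat n 1 = 0 := by
  have hinv : invCount (2 * n) 1 = 0 :=
    card_eq_zero.2 <| filter_eq_empty_iff.2 fun _ _ h => lt_asymm h.1 h.2
  have hneg : negCount n 1 = 0 :=
    card_eq_zero.2 <| filter_eq_empty_iff.2 fun i hi h => by
      rw [mem_Icc] at hi
      rw [Perm.one_apply] at h
      omega
  rw [lenStat, map_one, hinv, hneg]

theorem lenStat_mul_tB_zero (hn : 0 < n) (hw : w ∈ WB n) :
    lenStat n (w * tB 0) + 2 * (if w 1 < 0 then 1 else 0) =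
      lenStat n w + 2 * (if 0 < w 1 then 1 else 0) := by
  have hψ₁ : phiEquiv n (-1) = n := by rw [phiEquiv_apply_of_neg (by omega) (by omega)]; ring
  have hψ₂ : phiEquiv n 1 = n + 1 := by rw [phiEquiv_apply_of_pos one_pos]; ring
  have hconj : MulAut.conj (phiEquiv n) (tB 0) = swap (n : ℤ) (n + 1) := by
    rw [MulAut.conj_apply, tB, ← swap_apply_apply, hψ₁, hψ₂]
  rw [lenStat, lenStat, map_mul, hconj]
  set v := MulAut.conj (phiEquiv n) w
  have hv₁ : v n = phiEquiv n (-w 1) := by rw [← hψ₁, conj_phiEquiv_apply_phiEquiv, hw.1]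
  have hv₂ : v (n + 1) = phiEquiv n (w 1) := by rw [← hψ₂, conj_phiEquiv_apply_phiEquiv]
  have hw₁ : w 1 ≠ 0 := WB.apply_ne_zero hw one_ne_zero
  have hinv := invCount_mul_swap (m := 2 * n) (a := n) (by omega) (by omega) v
  simp only [hv₁, hv₂, phiEquiv_lt_phiEquiv_iff hw₁ (neg_ne_zero.2 hw₁),
    phiEquiv_lt_phiEquiv_iff (neg_ne_zero.2 hw₁) hw₁] at hinv
  have hneg := negCount_mul_tB_zero hn hw
  split_ifs at hinv hneg ⊢ <;> omega

theorem lenStat_mul_tB_succ {k : ℕ} (hk : k + 2 ≤ n) (hw : w ∈ WB n) :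
    lenStat n (w * tB (k + 1)) + 2 * (if w (k + 2) < w (k + 1) then 1 else 0) =
      lenStat n w + 2 * (if w (k + 1) < w (k + 2) then 1 else 0) := by
  set a₁ : ℤ := n + (k + 1)
  set a₂ : ℤ := n - (k + 1)
  have hψ₁ : phiEquiv n (k + 1) = a₁ := by rw [phiEquiv_apply_of_pos (by omega)]; ring
  have hψ₂ : phiEquiv n (k + 2) = a₁ + 1 := by rw [phiEquiv_apply_of_pos (by omega)]; ring
  have hψ₃ : phiEquiv n (-(k + 2)) = a₂ := by
    rw [phiEquiv_apply_of_neg (by omega) (by omega)]; ring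
  have hψ₄ : phiEquiv n (-(k + 1)) = a₂ + 1 := by
    rw [phiEquiv_apply_of_neg (by omega) (by omega)]; ring
  have hconj : MulAut.conj (phiEquiv n) (tB (k + 1)) = swap a₁ (a₁ + 1) * swap a₂ (a₂ + 1) := by
    rw [tB, map_mul, MulAut.conj_apply, MulAut.conj_apply, ← swap_apply_apply,
      ← swap_apply_apply, hψ₁, hψ₂, hψ₃, hψ₄, swap_comm (a₂ + 1)]
  rw [lenStat, lenStat, map_mul, hconj, ← mul_assoc, negCount_mul_tB_succ hk]
  set v := MulAut.conj (phiEquiv n) w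
  have hv₁ : v a₁ = phiEquiv n (w (k + 1)) := by rw [← hψ₁, conj_phiEquiv_apply_phiEquiv]
  have hv₂ : v (a₁ + 1) = phiEquiv n (w (k + 2)) := by rw [← hψ₂, conj_phiEquiv_apply_phiEquiv]
  have hv₃ : v a₂ = phiEquiv n (-w (k + 2)) := by rw [← hψ₃, conj_phiEquiv_apply_phiEquiv, hw.1]
  have hv₄ : v (a₂ + 1) = phiEquiv n (-w (k + 1)) := by
    rw [← hψ₄, conj_phiEquiv_apply_phiEquiv, hw.1]
  have hv₃' : (v * swap a₁ (a₁ + 1)) a₂ = v a₂ := by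
    rw [Perm.mul_apply, swap_apply_of_ne_of_ne (by omega) (by omega)]
  have hv₄' : (v * swap a₁ (a₁ + 1)) (a₂ + 1) = v (a₂ + 1) := by
    rw [Perm.mul_apply, swap_apply_of_ne_of_ne (by omega) (by omega)]
  have hw₁ : w (k + 1) ≠ 0 := WB.apply_ne_zero hw (by omega)
  have hw₂ : w (k + 2) ≠ 0 := WB.apply_ne_zero hw (by omega)
  have hinv₁ := invCount_mul_swap (m := 2 * n) (a := a₁) (by omega) (by omega) v
  have hinv₂ := invCount_mul_swap (m := 2 * n) (a := a₂) (by omega) (by omega)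
    (v * swap a₁ (a₁ + 1))
  simp only [hv₁, hv₂, phiEquiv_lt_phiEquiv_iff hw₁ hw₂, phiEquiv_lt_phiEquiv_iff hw₂ hw₁] at hinv₁
  simp only [hv₃', hv₄', hv₃, hv₄,
    phiEquiv_lt_phiEquiv_iff (neg_ne_zero.2 hw₁) (neg_ne_zero.2 hw₂),
    phiEquiv_lt_phiEquiv_iff (neg_ne_zero.2 hw₂) (neg_ne_zero.2 hw₁), neg_lt_neg_iff] at hinv₂
  split_ifs at hinv₁ hinv₂ ⊢ <;> omega

theorem lenStat_mul_tB {i : ℕ} (hi : i < n) (hw : w ∈ WB n) :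
    lenStat n (w * tB i) + 2 * (if w (i + 1) < w i then 1 else 0) =
      lenStat n w + 2 * (if w i < w (i + 1) then 1 else 0) := by
  rcases i with _ | k
  · simpa [WB.apply_zero hw] using lenStat_mul_tB_zero hi hw
  · push_cast
    rw [add_assoc, one_add_one_eq_two]
    exact lenStat_mul_tB_succ hi hw

end LenStat

theorem lenB_eq_wordLength (n : ℕ) (σ : WB n) :
    lenB n σ = wordLength (fun i : Fin n => tB i) σ := by
  simp only [lenB, wordLength, List.pure_def, List.bind_eq_flatMap, ← List.map_eq_flatMap,
    List.map_map]
  rfl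

theorem lenStat_eq_two_mul_lenB {n : ℕ} (σ : WB n) : lenStat n σ = 2 * lenB n σ := by
  rw [lenB_eq_wordLength]
  refine eq_mul_wordLength (fun i : Fin n => tB_mem_WB i.2) (fun i => tB_mul_self i) lenStat_one
    (fun w hw i => ?_) (fun w hw hne => ?_) σ.2
  · have hstep := lenStat_mul_tB i.2 hw
    have hne := w.injective.ne (show ((i : ℕ) : ℤ) ≠ i + 1 by omega)
    split_ifs at hstep <;> omega
  · obtain ⟨i, hi⟩ := WB.exists_lt_of_ne_one hw hne
    refine ⟨i, ?_⟩
    have hstep := lenStat_mul_tB i.2 hw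
    rw [if_pos hi, if_neg hi.not_gt] at hstep
    omega

/-- The map `Ψ_n : W_n → S_{2n}`, `Ψ_n(σ) = ψ ∘ σ ∘ ψ⁻¹` (with
`ψ : [±n] → [2n]` the order-preserving bijection), is an injective group homomorphism
into `S_{2n}` (it fixes all points outside `[2n]`), and for all `σ ∈ W_n` the Coxeter
length satisfies `ℓ(Ψ_n(σ)) = 2 ℓ(σ) − ℓ_0(σ)`, i.e.
`ℓ(Ψ_n(σ)) + ℓ_0(σ) = 2 ℓ(σ)`, where the length in `S_{2n}` is the number of
inversions. -/
theorem stmt_9 (n : ℕ) :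
    Function.Injective (PsiB n) ∧
    (∀ u v : WB n, PsiB n (u * v) = PsiB n u * PsiB n v) ∧
    (∀ (σ : WB n) (j : ℤ), j < 1 ∨ 2 * (n : ℤ) < j → PsiB n σ j = j) ∧
    (∀ σ : WB n, invS2n n (PsiB n σ) + ell0 n σ = 2 * lenB n σ) := by
  have hPsi : PsiB n = MulAut.conj (phiEquiv n) ∘ Subtype.val := rfl
  refine ⟨?_, fun u v => ?_, fun σ j hj => ?_, fun σ => ?_⟩
  · rw [hPsi]
    exact (MulAut.conj _).injective.comp Subtype.val_injective
  · simp [hPsi]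
  · obtain ⟨x, rfl⟩ := (phiEquiv n).surjective j
    rw [hPsi, Function.comp_apply, conj_phiEquiv_apply_phiEquiv]
    rcases eq_zero_or_lt_abs_of_phiEquiv_notMem hj with rfl | hx
    · rw [WB.apply_zero σ.2]
    · rw [σ.2.2 x hx]
  · rw [invS2n_eq_invCount, ell0_eq_negCount, ← lenStat_eq_two_mul_lenB]
    rfl
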